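/- For every nonzero ordinal α, the following are equivalent: (1) α is additively indecomposable, i.e., whenever α = β + γ, either β = α or γ = α; (2) α is strongly indecomposable, i.e., whenever α is an instance of a sum of ordinals β and γ, either β = α or γ = α. -/

import Mathlib

/-!
An additively indecomposable ordinal is `0` or a power `ω ^ δ`. If `Iio α` is split into pieces
of order types `β` and `γ`, then `α ≤ β ♯ γ` (natural sum): by induction along `Iio α`, each
`x < α` is bounded by the natural sum of the positions reached so far in the two pieces. Powers
of `ω` are closed under `♯`, since `ω ^ (δ + 1) = ω ^ δ * ω` and `♯` acts on quotient and
remainder modulo `ω ^ δ` separately; so `β, γ < α` is impossible. Conversely `β + γ` splits into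
`Iio β` and `[β, β + γ)`.
-/

universe u

/-- `γ` is an *instance of a sum* of `α` and `β`: the set of ordinals below `γ` can be
partitioned into two subsets whose induced orders have order types `α` and `β`
(equivalently, are order-isomorphic to the sets of ordinals below `α` resp. `β`). -/
def IsSumInstance (γ α β : Ordinal.{u}) : Prop :=
  ∃ s : Set Ordinal.{u}, s ⊆ Set.Iio γ ∧
    Nonempty (↥s ≃o ↥(Set.Iio α)) ∧ Nonempty (↥(Set.Iio γ \ s) ≃o ↥(Set.Iio β))

open Set

namespace Ordinal

/-- The Hessenberg natural sum. -/
noncomputable def nadd (a b : Ordinal.{u}) : Ordinal.{u} :=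
  sInf {c | (∀ a' < a, nadd a' b < c) ∧ ∀ b' < b, nadd a b' < c}
termination_by (a, b)
decreasing_by
  · exact Prod.Lex.left _ _ ‹_›
  · exact Prod.Lex.right _ ‹_›

infixl:65 " ♯ " => nadd

theorem nadd_le_iff {a b c : Ordinal.{u}} :
    a ♯ b ≤ c ↔ (∀ a' < a, a' ♯ b < c) ∧ ∀ b' < b, a ♯ b' < c := by
  refine ⟨fun h ↦ ?_, fun h ↦ by rw [nadd]; exact csInf_le' h⟩
  obtain ⟨M, hM⟩ := bddAbove_of_small (s := range <|
    Sum.elim (fun a' : Iio a ↦ a'.1 ♯ b) (fun b' : Iio b ↦ a ♯ b'.1))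
  have hne : {c | (∀ a' < a, a' ♯ b < c) ∧ ∀ b' < b, a ♯ b' < c}.Nonempty :=
    ⟨Order.succ M, fun a' ha' ↦ Order.lt_succ_iff.2 (hM ⟨.inl ⟨a', ha'⟩, rfl⟩),
      fun b' hb' ↦ Order.lt_succ_iff.2 (hM ⟨.inr ⟨b', hb'⟩, rfl⟩)⟩
  have hmem := csInf_mem hne
  rw [← nadd] at hmem
  exact ⟨fun a' ha' ↦ (hmem.1 a' ha').trans_le h, fun b' hb' ↦ (hmem.2 b' hb').trans_le h⟩

theorem nadd_lt_nadd_right {a b : Ordinal.{u}} (h : a < b) (c : Ordinal.{u}) : a ♯ c < b ♯ c :=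
  (nadd_le_iff.1 le_rfl).1 a h

theorem nadd_lt_nadd_left {b c : Ordinal.{u}} (h : b < c) (a : Ordinal.{u}) : a ♯ b < a ♯ c :=
  (nadd_le_iff.1 le_rfl).2 b h

theorem natCast_nadd_natCast_le (m n : ℕ) : (m : Ordinal.{u}) ♯ n ≤ (m + n : ℕ) := by
  induction m using Nat.strong_induction_on generalizing n with | _ m IHm =>
  induction n using Nat.strong_induction_on with | _ n IHn =>
  refine nadd_le_iff.2 ⟨fun a ha ↦ ?_, fun b hb ↦ ?_⟩
  · obtain ⟨m', rfl⟩ := lt_omega0.1 (ha.trans (natCast_lt_omega0 m))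
    have hm' : m' < m := by exact_mod_cast ha
    exact (IHm m' hm' n).trans_lt (by exact_mod_cast Nat.add_lt_add_right hm' n)
  · obtain ⟨n', rfl⟩ := lt_omega0.1 (hb.trans (natCast_lt_omega0 n))
    have hn' : n' < n := by exact_mod_cast hb
    exact (IHn n' hn').trans_lt (by exact_mod_cast Nat.add_lt_add_left hn' m)

theorem isPrincipal_nadd_omega0 : IsPrincipal (· ♯ ·) ω := by
  intro a b ha hb
  obtain ⟨m, rfl⟩ := lt_omega0.1 ha
  obtain ⟨n, rfl⟩ := lt_omega0.1 hb
  exact (natCast_nadd_natCast_le m n).trans_lt (natCast_lt_omega0 _)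

theorem mul_add_lt_mul_add {ρ q q' t t' : Ordinal} (h : q' < q ∨ q' = q ∧ t' < t)
    (ht' : t' < ρ) : ρ * q' + t' < ρ * q + t := by
  rcases h with hq | ⟨rfl, ht⟩
  · calc ρ * q' + t' < ρ * q' + ρ := (add_lt_add_iff_left _).2 ht'
      _ = ρ * Order.succ q' := (mul_succ ρ q').symm
      _ ≤ ρ * q := by gcongr; exact Order.succ_le_of_lt hq
      _ ≤ ρ * q + t := le_self_add
  · exact (add_lt_add_iff_left _).2 ht

theorem div_lt_div_or_mod_lt_mod {a b ρ : Ordinal} (h : a < b) :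
    a / ρ < b / ρ ∨ a / ρ = b / ρ ∧ a % ρ < b % ρ := by
  refine (div_le_left h.le ρ).lt_or_eq.imp_right fun hq ↦ ⟨hq, ?_⟩
  rwa [← div_add_mod a ρ, ← div_add_mod b ρ, hq, add_lt_add_iff_left] at h

theorem nadd_le_mul_div_nadd_add {ρ : Ordinal} (hρ : IsPrincipal (· ♯ ·) ρ) (hρ0 : ρ ≠ 0)
    (a b : Ordinal) : a ♯ b ≤ ρ * (a / ρ ♯ b / ρ) + (a % ρ ♯ b % ρ) := by
  induction a using WellFoundedLT.induction generalizing b with | _ a IHa =>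
  induction b using WellFoundedLT.induction with | _ b IHb =>
  have hmod (x y : Ordinal) : x % ρ ♯ y % ρ < ρ := hρ (mod_lt x hρ0) (mod_lt y hρ0)
  refine nadd_le_iff.2
    ⟨fun a' ha' ↦ (IHa a' ha' b).trans_lt ?_, fun b' hb' ↦ (IHb b' hb').trans_lt ?_⟩
  · refine mul_add_lt_mul_add ?_ (hmod a' b)
    rcases div_lt_div_or_mod_lt_mod (ρ := ρ) ha' with hq | ⟨hq, hr⟩
    · exact .inl (nadd_lt_nadd_right hq _)
    · exact .inr ⟨by rw [hq], nadd_lt_nadd_right hr _⟩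
  · refine mul_add_lt_mul_add ?_ (hmod a b')
    rcases div_lt_div_or_mod_lt_mod (ρ := ρ) hb' with hq | ⟨hq, hr⟩
    · exact .inl (nadd_lt_nadd_left hq _)
    · exact .inr ⟨by rw [hq], nadd_lt_nadd_left hr _⟩

theorem isPrincipal_nadd_mul {ρ σ : Ordinal} (hρ : IsPrincipal (· ♯ ·) ρ)
    (hσ : IsPrincipal (· ♯ ·) σ) : IsPrincipal (· ♯ ·) (ρ * σ) := by
  intro a b ha hb
  have hρ0 : ρ ≠ 0 := by rintro rfl; simp at ha
  calc a ♯ b ≤ ρ * (a / ρ ♯ b / ρ) + (a % ρ ♯ b % ρ) := nadd_le_mul_div_nadd_add hρ hρ0 a b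
    _ < ρ * σ + 0 := by
      refine mul_add_lt_mul_add (.inl (hσ ?_ ?_)) (hρ (mod_lt a hρ0) (mod_lt b hρ0))
      · exact (lt_mul_iff_div_lt hρ0).1 ha
      · exact (lt_mul_iff_div_lt hρ0).1 hb
    _ = ρ * σ := add_zero _

theorem isPrincipal_nadd_omega0_opow (δ : Ordinal) : IsPrincipal (· ♯ ·) (ω ^ δ) := by
  induction δ using limitRecOn with
  | zero =>
    rw [opow_zero, isPrincipal_one_iff]
    exact nonpos_iff_eq_zero.1 <|
      nadd_le_iff.2 ⟨fun _ h ↦ (not_lt_zero h).elim, fun _ h ↦ (not_lt_zero h).elim⟩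
  | add_one δ IH =>
    rw [← Order.succ_eq_add_one, opow_succ]
    exact isPrincipal_nadd_mul IH isPrincipal_nadd_omega0
  | limit δ hδ IH =>
    rw [opow_limit omega0_ne_zero hδ]
    exact IsPrincipal.iSup fun ε ↦ IH ε ε.2

theorem isPrincipal_nadd_of_isPrincipal_add {α : Ordinal} (h : IsPrincipal (· + ·) α) :
    IsPrincipal (· ♯ ·) α := by
  obtain rfl | ⟨δ, rfl⟩ := isPrincipal_add_iff_zero_or_omega0_opow.1 h
  · exact isPrincipal_zero
  · exact isPrincipal_nadd_omega0_opow δ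

theorem le_nadd_of_strictMono {x b c : Ordinal} {s t : Set Ordinal} (hst : Iio x ⊆ s ∪ t)
    {f : s → Ordinal} {g : t → Ordinal} (hf : StrictMono f) (hg : StrictMono g)
    (hfb : ∀ y : s, y.1 < x → f y < b) (hgc : ∀ y : t, y.1 < x → g y < c) : x ≤ b ♯ c := by
  induction x using WellFoundedLT.induction generalizing b c with | _ x IH =>
  refine le_of_forall_lt fun y hy ↦ ?_
  have hst' := (Iio_subset_Iio hy.le).trans hst
  rcases hst hy with hys | hyt
  · have hy_le := IH y hy hst' (fun z hz ↦ hf (show z < ⟨y, hys⟩ from hz))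
      fun z hz ↦ hgc z (hz.trans hy)
    exact hy_le.trans_lt (nadd_lt_nadd_right (hfb ⟨y, hys⟩ hy) c)
  · have hy_le := IH y hy hst' (fun z hz ↦ hfb z (hz.trans hy))
      fun z hz ↦ hg (show z < ⟨y, hyt⟩ from hz)
    exact hy_le.trans_lt (nadd_lt_nadd_left (hgc ⟨y, hyt⟩ hy) b)

theorem le_of_strictMono_Iio {α β : Ordinal} {f : Iio β → Ordinal} (hf : StrictMono f)
    (hfα : ∀ x, f x < α) : β ≤ α := by
  let e : β.ToType ↪o α.ToType := ToType.mk.symm.toOrderEmbedding.trans <|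
    (OrderEmbedding.ofStrictMono (fun x ↦ ⟨f x, hfα x⟩) hf).trans ToType.mk.toOrderEmbedding
  simpa only [type_toType] using e.ltEmbedding.ordinal_type_le

end Ordinal

open Ordinal

namespace IsSumInstance

variable {α β γ : Ordinal.{u}}

theorem left_le (h : IsSumInstance α β γ) : β ≤ α := by
  obtain ⟨s, hs, ⟨e⟩, -⟩ := h
  exact le_of_strictMono_Iio ((Subtype.strictMono_coe _).comp e.symm.strictMono)
    fun x ↦ hs (e.symm x).2

theorem right_le (h : IsSumInstance α β γ) : γ ≤ α := by
  obtain ⟨s, -, -, ⟨e⟩⟩ := h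
  exact le_of_strictMono_Iio ((Subtype.strictMono_coe _).comp e.symm.strictMono)
    fun x ↦ (e.symm x).2.1

theorem le_nadd (h : IsSumInstance α β γ) : α ≤ β ♯ γ := by
  obtain ⟨s, -, ⟨e₁⟩, ⟨e₂⟩⟩ := h
  refine le_nadd_of_strictMono (fun x hx ↦ ?_) ((Subtype.strictMono_coe _).comp e₁.strictMono)
    ((Subtype.strictMono_coe _).comp e₂.strictMono) (fun y _ ↦ (e₁ y).2) fun y _ ↦ (e₂ y).2
  by_cases hxs : x ∈ s
  · exact .inl hxs
  · exact .inr ⟨hx, hxs⟩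

end IsSumInstance

theorem isSumInstance_add (β γ : Ordinal.{u}) : IsSumInstance (β + γ) β γ := by
  refine ⟨Iio β, Iio_subset_Iio le_self_add, ⟨OrderIso.refl _⟩, ⟨OrderIso.symm ?_⟩⟩
  refine StrictMono.orderIsoOfSurjective (fun x ↦ ⟨β + x, ?_, ?_⟩) (fun x y hxy ↦ ?_) ?_
  · exact (add_lt_add_iff_left β).2 x.2
  · exact not_lt.2 (le_self_add (a := β))
  · exact (add_lt_add_iff_left β).2 hxy
  · rintro ⟨y, hyγ, hyβ⟩
    obtain ⟨z, rfl⟩ := le_iff_exists_add.1 (not_lt.1 (show ¬y < β from hyβ))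
    exact ⟨⟨z, (add_lt_add_iff_left β).1 hyγ⟩, rfl⟩

theorem additively_indecomposable_iff_strongly_indecomposable_general
    (α : Ordinal.{u}) :
    (∀ β γ : Ordinal.{u}, α = β + γ → β = α ∨ γ = α) ↔
    (∀ β γ : Ordinal.{u}, IsSumInstance α β γ → β = α ∨ γ = α) := by
  refine ⟨fun h β γ hsum ↦ ?_, fun h β γ hα ↦ h β γ (hα ▸ isSumInstance_add β γ)⟩
  have hprincipal : IsPrincipal (· + ·) α := isPrincipal_add_iff_add_lt_ne_self.2
    fun β hβ γ hγ hα ↦ (h β γ hα.symm).elim hβ.ne hγ.ne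
  by_contra! hne
  have hβ := hsum.left_le.lt_of_ne hne.1
  have hγ := hsum.right_le.lt_of_ne hne.2
  exact (isPrincipal_nadd_of_isPrincipal_add hprincipal hβ hγ).not_ge hsum.le_nadd

/-- A nonzero ordinal is additively indecomposable if and only if it is strongly
indecomposable (whenever it is an instance of a sum of `β` and `γ`, one of the two
summands equals it). -/
theorem additively_indecomposable_iff_strongly_indecomposable
    (α : Ordinal.{u}) (hα : α ≠ 0) :
    (∀ β γ : Ordinal.{u}, α = β + γ → β = α ∨ γ = α) ↔
    (∀ β γ : Ordinal.{u}, IsSumInstance α β γ → β = α ∨ γ = α) :=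
  additively_indecomposable_iff_strongly_indecomposable_general α
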